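/- Let M be a matroid and Q, R disjoint subsets of E(M) with k := κ_M(Q,R), and let F ⊆ E(M) − (Q ∪ R) be a set of elements each of which is non-flexible with respect to (Q,R). Then there is an ordering (f₁,…,fₙ) of F and a nested sequence A₁ ⊆ A₂ ⊆ … ⊆ Aₙ of subsets of E(M) such that for each i: (i) Q ⊆ Aᵢ ⊆ E(M)−R and λ_M(Aᵢ) ≤ k; (ii) Aᵢ ∩ F = {f₁,…,fᵢ}; (iii) fᵢ ∈ cl(Aᵢ−{fᵢ}) ∩ cl(E(M)−Aᵢ) or fᵢ ∈ cl*(Aᵢ−{fᵢ}) ∩ cl*(E(M)−Aᵢ). -/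

import Mathlib

open Set

variable {α : Type*}

/-- The rank of a set `X` in a matroid `M`: the supremum of cardinalities of
independent subsets of `X`. -/
noncomputable def Matroid.rk' (M : Matroid α) (X : Set α) : ℕ :=
  sSup {n | ∃ I, M.Indep I ∧ I ⊆ X ∧ I.ncard = n}

/-- The connectivity function `λ_M(X) = r(X) + r(E \ X) - r(M)`. -/
noncomputable def Matroid.lam (M : Matroid α) (X : Set α) : ℕ :=
  M.rk' X + M.rk' (M.E \ X) - M.rk' M.E

/-- The connectivity `κ_M(Q,R)` between disjoint sets `Q` and `R`. -/
noncomputable def Matroid.kappa (M : Matroid α) (Q R : Set α) : ℕ :=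
  sInf {k | ∃ X, Q ⊆ X ∧ X ⊆ M.E \ R ∧ M.lam X = k}

/-- Deletion of a set of elements. -/
def Matroid.del (M : Matroid α) (D : Set α) : Matroid α := M.restrict (M.E \ D)

/-- Contraction of a set of elements, defined via duality: `M / C = (M* \ C)*`. -/
def Matroid.con (M : Matroid α) (C : Set α) : Matroid α := (M✶.del C)✶

/-- `N` is a minor of `M` if it is obtained by contracting a set `C` and deleting a
disjoint set `D`. -/
def Matroid.IsMinorOf (N M : Matroid α) : Prop :=
  ∃ C D, C ⊆ M.E ∧ D ⊆ M.E ∧ Disjoint C D ∧ N = (M.con C).del D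

/-- `e` is deletable with respect to `(Q,R)`. -/
noncomputable def Matroid.Deletable (M : Matroid α) (Q R : Set α) (e : α) : Prop :=
  (M.del {e}).kappa Q R = M.kappa Q R

/-- `e` is contractible with respect to `(Q,R)`. -/
noncomputable def Matroid.Contractible (M : Matroid α) (Q R : Set α) (e : α) : Prop :=
  (M.con {e}).kappa Q R = M.kappa Q R

/-- `e` is flexible with respect to `(Q,R)` if it is both deletable and contractible. -/
noncomputable def Matroid.Flexible (M : Matroid α) (Q R : Set α) (e : α) : Prop :=
  M.Deletable Q R e ∧ M.Contractible Q R e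

/-- The local connectivity `⊓_M(A,B) = r(A) + r(B) - r(A ∪ B)`. -/
noncomputable def Matroid.localConn (M : Matroid α) (A B : Set α) : ℕ :=
  M.rk' A + M.rk' B - M.rk' (A ∪ B)

/-!
Call `X` a minimum separation if `Q ⊆ X ⊆ E - R` and `λ(X) = κ(Q,R)`. By submodularity of `λ`,
minimum separations are closed under union and intersection. If `e` is not deletable, a minimum
separation `S` of `M \ e` gives the minimum separation `X = S + e` of `M` with `X - e` again
minimum, since deleting `e` lowers `λ` by at most one; as `λ` and `κ` are self-dual, the same
holds when `e` is not contractible. The equality `λ(X) = λ(X - e)` puts `e` in the closures of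
both `X - e` and `E - X`, or in both coclosures.

The witnesses `X` for a fixed `e` form a lattice, so there is a least one `W e`, and `f ∈ W e`
with `f ≠ e` forces `W f ⊊ W e`. Listing `F` by increasing `|W e|` as `f₁, …, fₙ` and taking
`Aᵢ = W f₁ ∪ ⋯ ∪ W fᵢ` gives the chain.
-/

theorem Set.Finite.exists_injective_range_eq_monotone_comp {F : Set α} (hF : F.Finite)
    (c : α → ℕ) :
    ∃ (n : ℕ) (f : Fin n → α), Function.Injective f ∧ range f = F ∧
      Monotone (c ∘ f) := by
  classical
  set l := hF.toFinset.toList.mergeSort (fun a b => decide (c a ≤ c b))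
  have hperm : l.Perm hF.toFinset.toList := List.mergeSort_perm _ _
  have hsorted : l.Pairwise (fun a b => c a ≤ c b) := by
    simpa using List.pairwise_mergeSort (le := fun a b => decide (c a ≤ c b))
      (fun _ _ _ h₁ h₂ => by simp only [decide_eq_true_eq] at *; omega)
      (fun a b => by simpa using le_total (c a) (c b)) hF.toFinset.toList
  refine ⟨l.length, l.get, List.nodup_iff_injective_get.mp
    (hperm.nodup_iff.mpr (Finset.nodup_toList _)), ?_, ?_⟩
  · ext x
    simp [range_list_get, hperm.mem_iff]
  · intro i j hij
    rcases hij.lt_or_eq with hlt | rfl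
    · exact List.pairwise_iff_get.mp hsorted i j hlt
    · exact le_rfl

lemma biUnion_Iic_inter_range {n : ℕ} {f : Fin n → α} {W : α → Set α}
    (hmem : ∀ i, f i ∈ W (f i))
    (hbefore : ∀ i j, f j ∈ W (f i) → j ≤ i) (i : Fin n) :
    (⋃ j ∈ Iic i, W (f j)) ∩ range f = f '' Iic i := by
  ext x
  constructor
  · rintro ⟨hx, j', rfl⟩
    obtain ⟨j, hj, hj'⟩ := mem_iUnion₂.mp hx
    exact ⟨j', (hbefore j j' hj').trans hj, rfl⟩
  · rintro ⟨j, hj, rfl⟩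
    exact ⟨mem_biUnion hj (hmem j), mem_range_self j⟩

namespace Matroid

variable {M : Matroid α} {A I X Y : Set α} {e : α}

lemma IsBasis'.rk'_eq_ncard [M.Finite] (hI : M.IsBasis' I X) : M.rk' X = I.ncard := by
  have hIfin : I.Finite := M.set_finite I hI.indep.subset_ground
  refine le_antisymm (csSup_le ⟨0, ∅, M.empty_indep, empty_subset X, ncard_empty α⟩ ?_)
    (le_csSup ⟨M.E.ncard, ?_⟩ ⟨I, hI.indep, hI.subset, rfl⟩)
  · rintro n ⟨J, hJ, hJX, rfl⟩
    have hJfin : J.Finite := M.set_finite J hJ.subset_ground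
    have h := hJ.encard_le_eRk_of_subset hJX
    rwa [← hI.encard_eq_eRk, ← hJfin.cast_ncard_eq, ← hIfin.cast_ncard_eq, Nat.cast_le] at h
  · rintro n ⟨J, hJ, -, rfl⟩
    exact ncard_le_ncard hJ.subset_ground M.ground_finite

lemma cast_rk' [M.Finite] (X : Set α) : (M.rk' X : ℕ∞) = M.eRk X := by
  obtain ⟨I, hI⟩ := M.exists_isBasis' X
  rw [hI.rk'_eq_ncard, (M.set_finite I hI.indep.subset_ground).cast_ncard_eq, hI.encard_eq_eRk]

lemma rk'_mono [M.Finite] (hXY : X ⊆ Y) : M.rk' X ≤ M.rk' Y := by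
  simpa only [← cast_rk', Nat.cast_le] using M.eRk_mono hXY

lemma rk'_insert_le [M.Finite] (e : α) (X : Set α) : M.rk' (insert e X) ≤ M.rk' X + 1 := by
  have h := M.eRk_insert_le_add_one e X
  rw [← cast_rk', ← cast_rk'] at h
  exact_mod_cast h

lemma rk'_inter_add_rk'_union_le [M.Finite] (X Y : Set α) :
    M.rk' (X ∩ Y) + M.rk' (X ∪ Y) ≤ M.rk' X + M.rk' Y := by
  simpa only [← cast_rk', ← Nat.cast_add, Nat.cast_le] using M.eRk_inter_add_eRk_union_le X Y

lemma rk'_union_le [M.Finite] (X Y : Set α) : M.rk' (X ∪ Y) ≤ M.rk' X + M.rk' Y := by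
  simpa only [← cast_rk', ← Nat.cast_add, Nat.cast_le] using M.eRk_union_le_eRk_add_eRk X Y

lemma rk'_empty (M : Matroid α) [M.Finite] : M.rk' ∅ = 0 := by
  simpa only [← cast_rk', Nat.cast_eq_zero] using M.eRk_empty

lemma rk'_dual_add_rk'_ground [M.Finite] (hX : X ⊆ M.E) :
    M✶.rk' X + M.rk' M.E = M.rk' (M.E \ X) + X.ncard := by
  have h := M.eRk_dual_add_eRank X hX
  rwa [eRank_def, ← cast_rk', ← cast_rk', ← cast_rk', ← (M.set_finite X hX).cast_ncard_eq,
    ← Nat.cast_add, ← Nat.cast_add, Nat.cast_inj] at h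

lemma mem_closure_iff_rk'_insert [M.Finite] (he : e ∈ M.E) :
    e ∈ M.closure X ↔ M.rk' (insert e X) = M.rk' X := by
  rw [← Nat.cast_inj (R := ℕ∞), cast_rk', cast_rk']
  refine ⟨fun h => ?_, fun h => by_contra fun hcl => ?_⟩
  · rw [← eRk_insert_closure_eq, insert_eq_of_mem h, eRk_closure_eq]
  · rw [eRk_insert_eq_add_one ⟨he, hcl⟩, ← cast_rk'] at h
    exact absurd (by exact_mod_cast h) (M.rk' X).succ_ne_self

lemma lam_add_rk'_ground [M.Finite] (X : Set α) :
    M.lam X + M.rk' M.E = M.rk' X + M.rk' (M.E \ X) := by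
  have h : M.rk' M.E ≤ M.rk' X + M.rk' (M.E \ X) :=
    (rk'_mono (by rw [union_sdiff_self]; exact subset_union_right)).trans (M.rk'_union_le _ _)
  rw [lam]
  omega

lemma lam_inter_add_lam_union_le [M.Finite] (X Y : Set α) :
    M.lam (X ∩ Y) + M.lam (X ∪ Y) ≤ M.lam X + M.lam Y := by
  have hc := M.rk'_inter_add_rk'_union_le (M.E \ X) (M.E \ Y)
  rw [sdiff_inter_sdiff, ← sdiff_inter] at hc
  have := M.rk'_inter_add_rk'_union_le X Y
  have := M.lam_add_rk'_ground X
  have := M.lam_add_rk'_ground Y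
  have := M.lam_add_rk'_ground (X ∩ Y)
  have := M.lam_add_rk'_ground (X ∪ Y)
  omega

lemma lam_dual [M.Finite] (hX : X ⊆ M.E) : M✶.lam X = M.lam X := by
  have h₁ := rk'_dual_add_rk'_ground hX
  have h₂ := rk'_dual_add_rk'_ground (M := M) (sdiff_subset : M.E \ X ⊆ M.E)
  have h₃ := rk'_dual_add_rk'_ground (M := M) subset_rfl
  have hcard := ncard_sdiff_add_ncard_of_subset hX M.ground_finite
  rw [sdiff_sdiff_cancel_left hX] at h₂
  rw [sdiff_self, rk'_empty] at h₃
  simp only [lam, dual_ground]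
  omega

lemma rk'_restrict (hXY : X ⊆ Y) : (M ↾ Y).rk' X = M.rk' X := by
  simp only [rk', restrict_indep_iff]
  congr 1
  ext n
  exact ⟨fun ⟨I, ⟨hI, _⟩, hIX, hn⟩ => ⟨I, hI, hIX, hn⟩,
    fun ⟨I, hI, hIX, hn⟩ => ⟨I, ⟨hI, hIX.trans hXY⟩, hIX, hn⟩⟩

lemma lam_restrict (hXY : X ⊆ Y) : (M ↾ Y).lam X = M.rk' X + M.rk' (Y \ X) - M.rk' Y := by
  rw [lam, restrict_ground_eq, rk'_restrict hXY, rk'_restrict sdiff_subset, rk'_restrict subset_rfl]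

lemma lam_restrict_inter_le [M.Finite] (hY : Y ⊆ M.E) (X : Set α) :
    (M ↾ Y).lam (X ∩ Y) ≤ M.lam X := by
  rw [lam_restrict inter_subset_right, sdiff_inter_self_eq_sdiff]
  have h₁ := M.rk'_inter_add_rk'_union_le X Y
  have h₂ := M.rk'_inter_add_rk'_union_le (M.E \ X) (X ∪ Y)
  have h₃ : M.rk' (Y \ X) ≤ M.rk' ((M.E \ X) ∩ (X ∪ Y)) :=
    rk'_mono fun x hx => ⟨⟨hY hx.1, hx.2⟩, Or.inr hx.1⟩
  have h₄ : M.rk' M.E ≤ M.rk' ((M.E \ X) ∪ (X ∪ Y)) :=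
    rk'_mono fun x hx => by by_cases hxX : x ∈ X <;> simp [hxX, hx]
  have := M.lam_add_rk'_ground X
  omega

lemma lam_le_lam_del_add_one [M.Finite] (hX : X ⊆ M.E \ {e}) (he : e ∈ M.E) :
    M.lam X ≤ (M.del {e}).lam X + 1 ∧ M.lam (insert e X) ≤ (M.del {e}).lam X + 1 := by
  have heX : e ∉ X := fun h => (hX h).2 rfl
  have hcompl : M.E \ X = insert e ((M.E \ {e}) \ X) := by
    ext x; by_cases hxe : x = e <;> simp [hxe, he, heX]
  have hcompl' : M.E \ insert e X = (M.E \ {e}) \ X := by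
    ext x; by_cases hxe : x = e <;> simp [hxe]
  have hdel := lam_restrict (M := M) hX
  have h₁ := M.lam_add_rk'_ground X
  have h₂ := M.lam_add_rk'_ground (insert e X)
  rw [hcompl] at h₁
  rw [hcompl'] at h₂
  have := M.rk'_insert_le e X
  have := M.rk'_insert_le e ((M.E \ {e}) \ X)
  have := M.rk'_mono (sdiff_subset : M.E \ {e} ⊆ M.E)
  unfold del
  constructor <;> omega

variable {Q R : Set α}

lemma kappa_le_lam (hQX : Q ⊆ X) (hXR : X ⊆ M.E \ R) : M.kappa Q R ≤ M.lam X :=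
  Nat.sInf_le ⟨X, hQX, hXR, rfl⟩

lemma exists_lam_eq_kappa (hQ : Q ⊆ M.E) (hQR : Disjoint Q R) :
    ∃ X, Q ⊆ X ∧ X ⊆ M.E \ R ∧ M.lam X = M.kappa Q R :=
  Nat.sInf_mem (s := {k | ∃ X, Q ⊆ X ∧ X ⊆ M.E \ R ∧ M.lam X = k})
    ⟨M.lam Q, Q, subset_rfl, subset_sdiff.mpr ⟨hQ, hQR⟩, rfl⟩

lemma kappa_dual [M.Finite] (Q R : Set α) : M✶.kappa Q R = M.kappa Q R := by
  simp only [kappa, dual_ground]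
  congr 1
  ext n
  refine exists_congr fun X => and_congr_right fun _ => and_congr_right fun hXR => ?_
  rw [lam_dual (hXR.trans sdiff_subset)]

lemma kappa_restrict_le [M.Finite] (hY : Y ⊆ M.E) (hQY : Q ⊆ Y) (hQR : Disjoint Q R) :
    (M ↾ Y).kappa Q R ≤ M.kappa Q R := by
  obtain ⟨X, hQX, hXR, hX⟩ := M.exists_lam_eq_kappa (hQY.trans hY) hQR
  calc (M ↾ Y).kappa Q R ≤ (M ↾ Y).lam (X ∩ Y) :=
        kappa_le_lam (subset_inter hQX hQY) fun x hx => ⟨hx.2, (hXR hx.1).2⟩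
    _ ≤ M.kappa Q R := hX ▸ M.lam_restrict_inter_le hY X

structure IsMinSep (M : Matroid α) (Q R X : Set α) : Prop where
  subset : Q ⊆ X
  subset_sdiff : X ⊆ M.E \ R
  lam_eq : M.lam X = M.kappa Q R

lemma IsMinSep.subset_ground (h : M.IsMinSep Q R X) : X ⊆ M.E :=
  h.subset_sdiff.trans sdiff_subset

lemma isMinSep_dual_iff [M.Finite] : M✶.IsMinSep Q R X ↔ M.IsMinSep Q R X := by
  refine ⟨fun ⟨hQ, hR, h⟩ => ⟨hQ, hR, ?_⟩, fun ⟨hQ, hR, h⟩ => ⟨hQ, hR, ?_⟩⟩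
  · rwa [lam_dual (M := M) (hR.trans sdiff_subset), M.kappa_dual] at h
  · rwa [lam_dual (M := M) (hR.trans sdiff_subset), M.kappa_dual]

lemma IsMinSep.inter [M.Finite] (hX : M.IsMinSep Q R X) (hY : M.IsMinSep Q R Y) :
    M.IsMinSep Q R (X ∩ Y) := by
  have hinter : Q ⊆ X ∩ Y := subset_inter hX.subset hY.subset
  have := M.lam_inter_add_lam_union_le X Y
  have := kappa_le_lam hinter (inter_subset_left.trans hX.subset_sdiff)
  have := kappa_le_lam (hX.subset.trans subset_union_left)
    (union_subset hX.subset_sdiff hY.subset_sdiff)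
  exact ⟨hinter, inter_subset_left.trans hX.subset_sdiff, by linarith [hX.lam_eq, hY.lam_eq]⟩

lemma IsMinSep.union [M.Finite] (hX : M.IsMinSep Q R X) (hY : M.IsMinSep Q R Y) :
    M.IsMinSep Q R (X ∪ Y) := by
  have hunion : X ∪ Y ⊆ M.E \ R := union_subset hX.subset_sdiff hY.subset_sdiff
  have := M.lam_inter_add_lam_union_le X Y
  have := kappa_le_lam (subset_inter hX.subset hY.subset)
    (inter_subset_left.trans hX.subset_sdiff)
  have := kappa_le_lam (hX.subset.trans subset_union_left) hunion
  exact ⟨hX.subset.trans subset_union_left, hunion, by linarith [hX.lam_eq, hY.lam_eq]⟩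

lemma IsMinSep.union_biUnion [M.Finite] {ι : Type*} {s : Set ι} {X : ι → Set α}
    (hs : s.Finite) (hY : M.IsMinSep Q R Y) (hX : ∀ i ∈ s, M.IsMinSep Q R (X i)) :
    M.IsMinSep Q R (Y ∪ ⋃ i ∈ s, X i) := by
  induction s, hs using Set.Finite.induction_on with
  | empty => simpa using hY
  | @insert i s _ _ ih =>
    rw [biUnion_insert, union_left_comm]
    exact (hX i (mem_insert i s)).union (ih fun j hj => hX j (mem_insert_of_mem i hj))

structure IsNonflexWitness (M : Matroid α) (Q R : Set α) (e : α) (X : Set α) : Prop where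
  mem : e ∈ X
  isMinSep : M.IsMinSep Q R X
  isMinSep_sdiff : M.IsMinSep Q R (X \ {e})

lemma exists_isNonflexWitness_of_not_deletable [M.Finite] (hQ : Q ⊆ M.E)
    (hQR : Disjoint Q R) (he : e ∈ M.E \ (Q ∪ R)) (hnd : ¬ M.Deletable Q R e) :
    ∃ X, M.IsNonflexWitness Q R e X := by
  have heQ : e ∉ Q := fun h => he.2 (Or.inl h)
  have hQe : Q ⊆ M.E \ {e} := fun x hx => ⟨hQ hx, fun h => heQ (h ▸ hx)⟩
  have hlt : (M.del {e}).kappa Q R < M.kappa Q R :=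
    (M.kappa_restrict_le sdiff_subset hQe hQR).lt_of_ne hnd
  obtain ⟨S, hQS, hSR, hS⟩ := (M.del {e}).exists_lam_eq_kappa hQe hQR
  have hSe : S ⊆ M.E \ {e} := hSR.trans sdiff_subset
  have hSR' : S ⊆ M.E \ R := fun x hx => ⟨(hSe hx).1, (hSR hx).2⟩
  have hinsR : insert e S ⊆ M.E \ R := insert_subset ⟨he.1, fun h => he.2 (Or.inr h)⟩ hSR'
  obtain ⟨hlamS, hlamIns⟩ := lam_le_lam_del_add_one hSe he.1
  have h₁ := kappa_le_lam hQS hSR'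
  have h₂ := kappa_le_lam (hQS.trans (subset_insert e S)) hinsR
  refine ⟨insert e S, mem_insert e S, ⟨hQS.trans (subset_insert e S), hinsR, by omega⟩, ?_⟩
  rw [insert_sdiff_self_of_notMem fun h => (hSe h).2 rfl]
  exact ⟨hQS, hSR', by omega⟩

lemma IsNonflexWitness.of_dual [M.Finite] (h : M✶.IsNonflexWitness Q R e X) :
    M.IsNonflexWitness Q R e X :=
  ⟨h.mem, isMinSep_dual_iff.mp h.isMinSep, isMinSep_dual_iff.mp h.isMinSep_sdiff⟩

lemma contractible_iff_deletable_dual [M.Finite] :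
    M.Contractible Q R e ↔ M✶.Deletable Q R e := by
  have : (M✶.del {e}).Finite := restrict_finite (M.ground_finite.subset sdiff_subset)
  rw [Contractible, Deletable, con, kappa_dual, M.kappa_dual]

lemma exists_isNonflexWitness [M.Finite] (hQ : Q ⊆ M.E) (hQR : Disjoint Q R)
    (he : e ∈ M.E \ (Q ∪ R)) (hnf : ¬ M.Flexible Q R e) :
    ∃ X, M.IsNonflexWitness Q R e X := by
  rcases not_and_or.mp hnf with hnd | hnc
  · exact M.exists_isNonflexWitness_of_not_deletable hQ hQR he hnd
  · obtain ⟨X, hX⟩ := M✶.exists_isNonflexWitness_of_not_deletable hQ hQR he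
      (contractible_iff_deletable_dual.not.mp hnc)
    exact ⟨X, hX.of_dual⟩

lemma lam_insert_eq_lam_iff [M.Finite] (he : e ∈ M.E \ X) :
    M.lam (insert e X) = M.lam X ↔ (e ∈ M.closure X ↔ e ∈ M.closure (M.E \ insert e X)) := by
  have hcompl : insert e (M.E \ insert e X) = M.E \ X := by
    ext x; by_cases hxe : x = e <;> simp [hxe, he.1, he.2]
  have h₁ := M.lam_add_rk'_ground (insert e X)
  have h₂ := M.lam_add_rk'_ground X
  rw [mem_closure_iff_rk'_insert he.1, mem_closure_iff_rk'_insert he.1, hcompl]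
  have := M.rk'_insert_le e X
  have := M.rk'_mono (subset_insert e X)
  have := M.rk'_insert_le e (M.E \ insert e X)
  have := M.rk'_mono (subset_insert e (M.E \ insert e X))
  rw [hcompl] at *
  constructor
  · intro h
    constructor <;> intro <;> omega
  · intro h
    by_cases hX : M.rk' (insert e X) = M.rk' X
    · have := h.mp hX
      omega
    · have := mt h.mpr hX
      omega

lemma mem_dual_closure_iff_notMem_closure [M.Finite] (hX : X ⊆ M.E) (he : e ∈ M.E \ X) :
    e ∈ M✶.closure X ↔ e ∉ M.closure (M.E \ insert e X) := by
  have hcompl : insert e (M.E \ insert e X) = M.E \ X := by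
    ext x; by_cases hxe : x = e <;> simp [hxe, he.1, he.2]
  have h₁ := rk'_dual_add_rk'_ground (insert_subset he.1 hX)
  have h₂ := rk'_dual_add_rk'_ground hX
  rw [ncard_insert_of_notMem he.2 (M.set_finite X hX)] at h₁
  rw [mem_closure_iff_rk'_insert (M := M✶) he.1, mem_closure_iff_rk'_insert he.1, hcompl]
  have := M.rk'_insert_le e (M.E \ insert e X)
  have := M.rk'_mono (subset_insert e (M.E \ insert e X))
  rw [hcompl] at *
  constructor <;> intro <;> omega

lemma mem_closure_or_mem_dual_closure_of_lam_eq [M.Finite] (hA : A ⊆ M.E) (he : e ∈ A)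
    (h : M.lam A = M.lam (A \ {e})) :
    e ∈ M.closure (A \ {e}) ∩ M.closure (M.E \ A) ∨
      e ∈ M✶.closure (A \ {e}) ∩ M✶.closure (M.E \ A) := by
  have heA : e ∈ M.E \ (A \ {e}) := ⟨hA he, fun h => h.2 rfl⟩
  have hins : insert e (A \ {e}) = A := by rw [insert_sdiff_singleton, insert_eq_of_mem he]
  have hcompl : M.E \ insert e (M.E \ A) = A \ {e} := by
    ext x
    have := @hA x
    by_cases hxe : x = e <;> simp [hxe]
    tauto
  have hiff := (lam_insert_eq_lam_iff heA).mp (by rw [hins, h])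
  rw [hins] at hiff
  by_cases hcl : e ∈ M.closure (A \ {e})
  · exact Or.inl ⟨hcl, hiff.mp hcl⟩
  · refine Or.inr ⟨?_, ?_⟩
    · rw [mem_dual_closure_iff_notMem_closure (sdiff_subset.trans hA) heA, hins, ← hiff]
      exact hcl
    · rw [mem_dual_closure_iff_notMem_closure sdiff_subset ⟨hA he, fun h => h.2 he⟩, hcompl]
      exact hcl

lemma IsNonflexWitness.inter [M.Finite] (hX : M.IsNonflexWitness Q R e X)
    (hY : M.IsNonflexWitness Q R e Y) : M.IsNonflexWitness Q R e (X ∩ Y) := by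
  refine ⟨⟨hX.mem, hY.mem⟩, hX.isMinSep.inter hY.isMinSep, ?_⟩
  rw [sdiff_inter_distrib_right]
  exact hX.isMinSep_sdiff.inter hY.isMinSep_sdiff

lemma exists_isLeast_isNonflexWitness [M.Finite] (h : ∃ X, M.IsNonflexWitness Q R e X) :
    ∃ W, IsLeast {X | M.IsNonflexWitness Q R e X} W := by
  obtain ⟨W, hW⟩ := (M.ground_finite.finite_subsets.subset
    fun X (hX : M.IsNonflexWitness Q R e X) => hX.isMinSep.subset_ground).exists_minimal h
  exact ⟨W, hW.prop, fun X hX =>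
    (hW.le_of_le (hW.prop.inter hX) inter_subset_left).trans inter_subset_right⟩

lemma ssubset_of_mem_isLeast_isNonflexWitness [M.Finite] {V W : Set α} {f : α}
    (hV : IsLeast {X | M.IsNonflexWitness Q R e X} V)
    (hW : IsLeast {X | M.IsNonflexWitness Q R f X} W) (he : e ∈ W) (hef : e ≠ f) : V ⊂ W := by
  have hVW : V ⊆ W := by
    have hWV : M.IsNonflexWitness Q R e (W ∩ V) := by
      refine ⟨⟨he, hV.1.mem⟩, hW.1.isMinSep.inter hV.1.isMinSep, ?_⟩
      rw [inter_sdiff_assoc]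
      exact hW.1.isMinSep.inter hV.1.isMinSep_sdiff
    exact (hV.2 hWV).trans inter_subset_left
  refine ssubset_of_subset_not_subset hVW fun hWV => ?_
  have hWe : M.IsMinSep Q R (W \ {e}) := hVW.antisymm hWV ▸ hV.1.isMinSep_sdiff
  -- `W - e` would be a smaller witness for `f`
  have hWef : M.IsNonflexWitness Q R f (W \ {e}) := by
    refine ⟨⟨hW.1.mem, fun h => hef h.symm⟩, hWe, ?_⟩
    rw [Set.sdiff_sdiff, union_comm, ← sdiff_inter_sdiff]
    exact hW.1.isMinSep_sdiff.inter hWe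
  exact (hW.2 hWef he).2 rfl

lemma isNonflexWitness_biUnion_Iic [M.Finite] {n : ℕ} {f : Fin n → α} {W : α → Set α}
    (hW : ∀ i, M.IsNonflexWitness Q R (f i) (W (f i)))
    (hbefore : ∀ i j, f j ∈ W (f i) → j ≤ i) (i : Fin n) :
    M.IsNonflexWitness Q R (f i) (⋃ j ∈ Iic i, W (f j)) := by
  have hsdiff :
      (⋃ j ∈ Iic i, W (f j)) \ {f i} = (W (f i) \ {f i}) ∪ ⋃ j ∈ Iio i, W (f j) := by
    ext x
    simp only [mem_sdiff, mem_iUnion, mem_Iic, mem_Iio, mem_union, mem_singleton_iff]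
    constructor
    · rintro ⟨⟨j, hj, hx⟩, hxi⟩
      rcases hj.lt_or_eq with hlt | rfl
      · exact Or.inr ⟨j, hlt, hx⟩
      · exact Or.inl ⟨hx, hxi⟩
    · rintro (⟨hx, hxi⟩ | ⟨j, hj, hx⟩)
      · exact ⟨⟨i, le_rfl, hx⟩, hxi⟩
      · exact ⟨⟨j, hj.le, hx⟩, fun h => (hbefore j i (h ▸ hx)).not_gt hj⟩
  refine ⟨mem_biUnion (mem_Iic.mpr le_rfl) (hW i).mem, ?_, ?_⟩
  · have h := (hW i).isMinSep.union_biUnion (finite_Iic i) fun j _ => (hW j).isMinSep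
    rwa [union_eq_self_of_subset_left (subset_biUnion_of_mem (u := fun j => W (f j))
      (mem_Iic.mpr le_rfl))] at h
  · rw [hsdiff]
    exact (hW i).isMinSep_sdiff.union_biUnion (finite_Iio i) fun j _ => (hW j).isMinSep

end Matroid

theorem stmt_6_general (M : Matroid α) [M.Finite] (Q R : Set α) (hQ : Q ⊆ M.E)
    (hQR : Disjoint Q R) (k : ℕ) (hk : k = M.kappa Q R)
    (F : Set α) (hF : F ⊆ M.E \ (Q ∪ R)) (hnf : ∀ e ∈ F, ¬ M.Flexible Q R e) :
    ∃ (n : ℕ) (f : Fin n → α) (A : Fin n → Set α),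
      Function.Injective f ∧ Set.range f = F ∧
      (∀ i j : Fin n, i ≤ j → A i ⊆ A j) ∧
      (∀ i : Fin n,
        (Q ⊆ A i ∧ A i ⊆ M.E \ R ∧ M.lam (A i) ≤ k) ∧
        (A i ∩ F = f '' {j : Fin n | j ≤ i}) ∧
        ((f i ∈ M.closure (A i \ {f i}) ∩ M.closure (M.E \ A i)) ∨
          (f i ∈ M✶.closure (A i \ {f i}) ∩ M✶.closure (M.E \ A i)))) := by
  have hW (e) (he : e ∈ F) : ∃ W, IsLeast {X | M.IsNonflexWitness Q R e X} W :=
    Matroid.exists_isLeast_isNonflexWitness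
      (Matroid.exists_isNonflexWitness hQ hQR (hF he) (hnf e he))
  choose! W hW using hW
  obtain ⟨n, f, hinj, rfl, hmono⟩ :=
    (M.set_finite F (hF.trans sdiff_subset)).exists_injective_range_eq_monotone_comp
      fun e => (W e).ncard
  have hWf (i : Fin n) := hW (f i) (mem_range_self i)
  -- `f j ∈ W (f i)` with `j ≠ i` makes `W (f j)` strictly smaller, so `f j` comes first
  have hbefore (i j : Fin n) (hji : f j ∈ W (f i)) : j ≤ i := by
    refine not_lt.mp fun hij => (hmono hij.le).not_gt (ncard_lt_ncard ?_ ?_)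
    · exact Matroid.ssubset_of_mem_isLeast_isNonflexWitness (hWf j) (hWf i) hji
        (hinj.ne hij.ne')
    · exact M.set_finite _ (hWf i).1.isMinSep.subset_ground
  refine ⟨n, f, fun i => ⋃ j ∈ Iic i, W (f j), hinj, rfl,
    fun i j hij => biUnion_subset_biUnion_left (Iic_subset_Iic.mpr hij), fun i => ?_⟩
  have hA := Matroid.isNonflexWitness_biUnion_Iic (fun i => (hWf i).1) hbefore i
  refine ⟨⟨hA.isMinSep.subset, hA.isMinSep.subset_sdiff, hk ▸ hA.isMinSep.lam_eq.le⟩,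
    biUnion_Iic_inter_range (fun i => (hWf i).1.mem) hbefore i, ?_⟩
  exact Matroid.mem_closure_or_mem_dual_closure_of_lam_eq hA.isMinSep.subset_ground hA.mem
    (hA.isMinSep.lam_eq.trans hA.isMinSep_sdiff.lam_eq.symm)

theorem stmt_6 (M : Matroid α) [M.Finite] (Q R : Set α) (hQ : Q ⊆ M.E) (hR : R ⊆ M.E)
    (hQR : Disjoint Q R) (k : ℕ) (hk : k = M.kappa Q R)
    (F : Set α) (hF : F ⊆ M.E \ (Q ∪ R)) (hnf : ∀ e ∈ F, ¬ M.Flexible Q R e) :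
    ∃ (n : ℕ) (f : Fin n → α) (A : Fin n → Set α),
      Function.Injective f ∧ Set.range f = F ∧
      (∀ i j : Fin n, i ≤ j → A i ⊆ A j) ∧
      (∀ i : Fin n,
        (Q ⊆ A i ∧ A i ⊆ M.E \ R ∧ M.lam (A i) ≤ k) ∧
        (A i ∩ F = f '' {j : Fin n | j ≤ i}) ∧
        ((f i ∈ M.closure (A i \ {f i}) ∩ M.closure (M.E \ A i)) ∨
          (f i ∈ M✶.closure (A i \ {f i}) ∩ M✶.closure (M.E \ A i)))) :=
  stmt_6_general M Q R hQ hQR k hk F hF hnf
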